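/- Let p : 𝕊 → ℝ≥0∞ be a measurable function taking only the values 0 and 1 that is a prefix-free indicator, and let s ∈ 𝕊 be any trace. Then the set function k(s, ·) on measurable sets S ⊆ 𝕊 given by k(s, S) = ∫⁻_{prepend_s⁻¹(S)} p dμ_𝕊, i.e. the pushforward along prepend_s of the measure μ_𝕊.withDensity p, is a sub-probability measure on 𝕊: it is a measure with total mass k(s, 𝕊) ≤ 1. -/

import Mathlib

open MeasureTheory ENNReal

/-- The trace space: finite sequences of reals of arbitrary length. -/
abbrev Trace : Type := Σ n : ℕ, (Fin n → ℝ)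

/-- The trace measure on `Trace`: the sum over `n` of the pushforwards along `Sigma.mk n` of
`n`-dimensional Lebesgue measure restricted to the unit cube. -/
noncomputable def traceMeasure : Measure Trace :=
  Measure.sum fun n : ℕ =>
    Measure.map (Sigma.mk n)
      (volume.restrict {f : Fin n → ℝ | ∀ i, f i ∈ Set.Icc (0 : ℝ) 1})

/-- `s'` is a proper prefix of `s`: it is strictly shorter and agrees with `s` on its
first coordinates. -/
def ProperPrefix (s' s : Trace) : Prop :=
  ∃ h : s'.1 < s.1, ∀ i : Fin s'.1, s'.2 i = s.2 (Fin.castLE h.le i)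

/-- `p` is a prefix-free indicator: it is measurable, takes only the values `0` and `1`, and
whenever `p s = 1` then `p s' = 0` for every proper prefix `s'` of `s` and every proper
extension `s'` of `s`. -/
def IsPrefixFreeIndicator (p : Trace → ℝ≥0∞) : Prop :=
  Measurable p ∧ (∀ s : Trace, p s = 0 ∨ p s = 1) ∧
    ∀ s : Trace, p s = 1 → ∀ s' : Trace, (ProperPrefix s' s ∨ ProperPrefix s s') → p s' = 0

/-- Prepending a fixed trace `s` to a trace: concatenation `s ∗ s'`. -/
def prepend (s : Trace) : Trace → Trace :=
  fun s' => ⟨s.1 + s'.1, Fin.append s.2 s'.2⟩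

/-!
The mass of `traceMeasure.withDensity p` is `∑ₙ λₙ(Aₙ)`, where `Aₙ ⊆ [0,1]ⁿ` is the set of
accepted traces of length `n`, and pushing forward along `prepend s` cannot increase total mass.
Under the infinite product of uniform measures on `[0,1]^ℕ`, the cylinder over `Aₙ` has measure
`λₙ(Aₙ)`, and prefix-freeness makes these cylinders pairwise disjoint; so the sum is the measure
of their union, at most `1` (Kraft's inequality).
-/

lemma measure_univ_map_le {α β : Type*} [MeasurableSpace α] [MeasurableSpace β]
    (μ : Measure α) (f : α → β) : μ.map f Set.univ ≤ μ Set.univ := by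
  by_cases hf : AEMeasurable f μ
  · rw [Measure.map_apply_of_aemeasurable hf .univ, Set.preimage_univ]
  · simp [Measure.map_of_not_aemeasurable hf]

lemma measurable_sigmaMk {ι : Type*} {β : ι → Type*} [∀ i, MeasurableSpace (β i)] (i : ι) :
    Measurable (Sigma.mk i : β i → Sigma β) :=
  Measurable.of_le_map (iInf_le _ i)

lemma measurePreserving_infinitePi_restrict_fin {α : Type*} [MeasurableSpace α] (μ : Measure α)
    [IsProbabilityMeasure μ] (n : ℕ) :
    MeasurePreserving (fun (x : ℕ → α) (i : Fin n) => x i)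
      (Measure.infinitePi fun _ => μ) (Measure.pi fun _ => μ) where
  measurable := by fun_prop
  map_eq := by
    refine (Measure.pi_eq fun t ht => ?_).symm
    have hbox : (fun (x : ℕ → α) (i : Fin n) => x i) ⁻¹' Set.univ.pi t =
        (Finset.range n : Set ℕ).pi fun k => if h : k < n then t ⟨k, h⟩ else Set.univ := by
      ext x
      simp only [Set.mem_preimage, Set.mem_pi, Set.mem_univ, true_implies, Finset.coe_range,
        Set.mem_Iio, Fin.forall_iff]
      exact forall₂_congr fun k hk => by rw [dif_pos hk]
    rw [Measure.map_apply (by fun_prop) (.univ_pi ht), hbox,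
      Measure.infinitePi_pi _ fun k _ => by split_ifs <;> simp [ht],
      ← Fin.prod_univ_eq_prod_range]
    simp

theorem tsum_measure_pi_le_one_of_prefixFree {α : Type*} [MeasurableSpace α] (μ : Measure α)
    [IsProbabilityMeasure μ] (A : ∀ n, Set (Fin n → α)) (hA : ∀ n, MeasurableSet (A n))
    (hfree : ∀ m n (hmn : m < n), ∀ f ∈ A n, (fun i => f (Fin.castLE hmn.le i)) ∉ A m) :
    ∑' n, Measure.pi (fun _ => μ) (A n) ≤ 1 := by
  set cyl : ℕ → Set (ℕ → α) := fun n => (fun x (i : Fin n) => x i) ⁻¹' A n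
  have hcyl_disj : Pairwise (Function.onFun Disjoint cyl) := by
    refine (pairwise_disjoint_on cyl).2 fun m n hmn => Set.disjoint_left.2 fun x hm hn => ?_
    exact hfree m n hmn _ hn hm
  calc ∑' n, Measure.pi (fun _ => μ) (A n)
      = ∑' n, Measure.infinitePi (fun _ => μ) (cyl n) := by
        refine tsum_congr fun n => ?_
        exact ((measurePreserving_infinitePi_restrict_fin μ n).measure_preimage
          (hA n).nullMeasurableSet).symm
    _ = Measure.infinitePi (fun _ => μ) (⋃ n, cyl n) :=
        (measure_iUnion hcyl_disj fun n =>
          (measurePreserving_infinitePi_restrict_fin μ n).measurable (hA n)).symm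
    _ ≤ 1 := prob_le_one

lemma lintegral_eq_measure_preimage_one {α : Type*} [MeasurableSpace α] {μ : Measure α}
    {f : α → ℝ≥0∞} (hf : Measurable f) (h01 : ∀ x, f x = 0 ∨ f x = 1) :
    ∫⁻ x, f x ∂μ = μ (f ⁻¹' {1}) := by
  rw [← lintegral_indicator_one (hf (measurableSet_singleton 1))]
  refine lintegral_congr fun x => ?_
  rcases h01 x with h | h <;> simp [h]

instance : IsProbabilityMeasure (volume.restrict (Set.Icc (0 : ℝ) 1)) :=
  ⟨by simp⟩

lemma traceMeasure_apply {S : Set Trace} (hS : MeasurableSet S) :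
    traceMeasure S =
      ∑' n, Measure.pi (fun _ : Fin n => volume.restrict (Set.Icc (0 : ℝ) 1))
        (Sigma.mk (β := fun n => Fin n → ℝ) n ⁻¹' S) := by
  have hcube (n : ℕ) :
      {f : Fin n → ℝ | ∀ i, f i ∈ Set.Icc (0 : ℝ) 1} = Set.univ.pi fun _ => Set.Icc 0 1 := by
    ext f; simp only [Set.mem_ofPred_eq, Set.mem_univ_pi]
  simp_rw [traceMeasure, Measure.sum_apply _ hS, Measure.map_apply (measurable_sigmaMk _) hS,
    hcube, volume_pi, Measure.restrict_pi_pi]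

/-- For a prefix-free indicator `p` and any trace `s`, the pushforward along `prepend s` of the
measure `traceMeasure.withDensity p` (i.e. `S ↦ ∫⁻_{prepend s ⁻¹' S} p ∂μ_𝕊`) is a
sub-probability measure: its total mass is at most `1`. -/
theorem bootstrap_kernel_subprobability (p : Trace → ℝ≥0∞) (hp : IsPrefixFreeIndicator p)
    (s : Trace) :
    ((traceMeasure.withDensity p).map (prepend s)) Set.univ ≤ 1 := by
  obtain ⟨hmeas, h01, hfree⟩ := hp
  have hS : MeasurableSet (p ⁻¹' {1}) := hmeas (measurableSet_singleton 1)
  calc ((traceMeasure.withDensity p).map (prepend s)) Set.univ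
      ≤ traceMeasure.withDensity p Set.univ := measure_univ_map_le _ _
    _ = traceMeasure (p ⁻¹' {1}) := by
        rw [withDensity_apply _ .univ, Measure.restrict_univ,
          lintegral_eq_measure_preimage_one hmeas h01]
    _ ≤ 1 := by
        rw [traceMeasure_apply hS]
        refine tsum_measure_pi_le_one_of_prefixFree _ _ (fun n => measurable_sigmaMk n hS) ?_
        rintro m n hmn f hf hprefix
        exact one_ne_zero (hprefix.symm.trans (hfree ⟨n, f⟩ hf _ (.inl ⟨hmn, fun _ => rfl⟩)))
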